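/- arXiv:2310.01066 — 3 statements merged into one kernel-verified Lean document; each statement's English description precedes it below -/
import Mathlib

section
/- Let A = (a_0, a_1, ..., a_n) with a_0 = 0 and (a_1, ..., a_n) a sequence of distinct integers between 1 and n, let P_0, ..., P_k be the nonempty piles produced by patience sorting applied to A, and let I be a maximum feasible set for A. If u, v ∈ I are such that a_u ∈ P_i and a_v ∈ P_j with 0 ≤ i < j ≤ k, then u ⪯_A v (that is, u < v and a_u < a_v). -/
/-- One step of patience sorting: place index `i` (with value `a i`) on the
leftmost pile whose current top element is greater than `a i`, or start a
new pile at the right end if no such pile exists.  Each pile is a list of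
indices with the head being the top (most recently placed) element. -/
def place (a : ℕ → ℕ) : List (List ℕ) → ℕ → List (List ℕ)
  | [], i => [[i]]
  | p :: ps, i => if a i < a p.headI then (i :: p) :: ps else p :: place a ps i

/-- The (nonempty) piles obtained by patience sorting, processing the values
`a i` for `i ∈ idxs` in order. -/
def pilesOf (a : ℕ → ℕ) (idxs : List ℕ) : List (List ℕ) :=
  idxs.foldl (place a) []

/-- `I` is the index set of an increasing subsequence of `a`. -/
def Feasible (a : ℕ → ℕ) (I : Finset ℕ) : Prop :=
  ∀ i ∈ I, ∀ j ∈ I, i < j → a i < a j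

/-- A maximum feasible set for the sequence `a₀ = 0, a₁, …, aₙ`:
a feasible subset of the index set `{0, 1, …, n}` of largest cardinality. -/
def MaxFeasible (a : ℕ → ℕ) (n : ℕ) (I : Finset ℕ) : Prop :=
  I ⊆ Finset.range (n + 1) ∧ Feasible a I ∧
    ∀ J ⊆ Finset.range (n + 1), Feasible a J → J.card ≤ I.card

/-!
Patience sorting keeps the invariant `Stacked`: the top of each pile is at most every card in
that pile and in every pile to its right. Since a card goes on the leftmost pile whose top
exceeds it, when `y` arrives after `x` with `a x < a y`, the pile of `x` (whose top is at most
`a x`) and every pile to its left are skipped, so `y` lands strictly to the right of `x`; cards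
never change pile. Hence for `u, v` in a feasible set lying in piles `i < j`, `v < u` would put
`v` left of `u`, and `u = v` is impossible, so `u < v` and feasibility gives `a u < a v`.
-/

namespace PatienceSorting

variable {a : ℕ → ℕ}

def InPile (ps : List (List ℕ)) (k x : ℕ) : Prop := ∃ p ∈ ps[k]?, x ∈ p

section InPile

variable {ps : List (List ℕ)} {p : List ℕ} {k j x : ℕ}

@[simp]
lemma not_inPile_nil : ¬ InPile [] k x := by simp [InPile]

@[simp]
lemma inPile_cons_zero : InPile (p :: ps) 0 x ↔ x ∈ p := by simp [InPile]

@[simp]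
lemma inPile_cons_succ : InPile (p :: ps) (k + 1) x ↔ InPile ps k x := by simp [InPile]

lemma InPile.mem_flatten (h : InPile ps k x) : x ∈ ps.flatten := by
  obtain ⟨p, hp, hx⟩ := h
  exact List.mem_flatten.2 ⟨p, List.mem_of_getElem? hp, hx⟩

lemma InPile.unique (hnd : ps.flatten.Nodup) (hk : InPile ps k x) (hj : InPile ps j x) :
    k = j := by
  induction ps generalizing k j with
  | nil => simp at hk
  | cons p ps ih =>
    rw [List.flatten_cons, List.nodup_append] at hnd
    cases k <;> cases j <;> simp only [inPile_cons_zero, inPile_cons_succ] at hk hj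
    · rfl
    · exact (hnd.2.2 x hk x hj.mem_flatten rfl).elim
    · exact (hnd.2.2 x hj x hk.mem_flatten rfl).elim
    · rw [ih hnd.2.1 hk hj]

end InPile

inductive Stacked (a : ℕ → ℕ) : List (List ℕ) → Prop
  | nil : Stacked a []
  | cons {p : List ℕ} {ps : List (List ℕ)} :
      (∀ y ∈ (p :: ps).flatten, a p.headI ≤ a y) → Stacked a ps → Stacked a (p :: ps)

section Place

variable {ps : List (List ℕ)} {i k j x : ℕ}

lemma flatten_place_perm (ps : List (List ℕ)) (i : ℕ) :
    (place a ps i).flatten.Perm (i :: ps.flatten) := by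
  induction ps with
  | nil => simp [place]
  | cons p ps ih =>
    by_cases hlt : a i < a p.headI
    · simp [place, hlt]
    · simpa [place, hlt] using (ih.append_left p).trans List.perm_middle

lemma mem_flatten_place {y : ℕ} :
    y ∈ (place a ps i).flatten ↔ y = i ∨ y ∈ ps.flatten := by
  simp [(flatten_place_perm ps i).mem_iff]

lemma inPile_place (h : InPile (place a ps i) k x) : x = i ∨ InPile ps k x := by
  induction ps generalizing k with
  | nil => cases k <;> simp_all [place]
  | cons p ps ih =>
    by_cases hlt : a i < a p.headI
    · rw [place, if_pos hlt] at h
      cases k <;> simp_all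
    · rw [place, if_neg hlt] at h
      cases k <;> simp_all

lemma Stacked.place (h : Stacked a ps) : Stacked a (place a ps i) := by
  induction h with
  | nil => exact .cons (by simp) .nil
  | @cons p ps hp _ ih =>
    by_cases hlt : a i < a p.headI
    · rw [_root_.place, if_pos hlt]
      refine .cons ?_ ‹_›
      intro y hy
      rcases List.mem_cons.1 (List.flatten_cons ▸ hy : y ∈ i :: (p :: ps).flatten) with rfl | hy
      · exact le_rfl
      · exact (hlt.trans_le (hp y hy)).le
    · rw [_root_.place, if_neg hlt]
      refine .cons ?_ ih
      intro y hy
      rw [List.flatten_cons, List.mem_append, mem_flatten_place] at hy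
      rcases hy with hy | rfl | hy
      · exact hp y (List.mem_flatten_of_mem List.mem_cons_self hy)
      · exact not_lt.1 hlt
      · exact hp y (by simp [hy])

lemma lt_of_inPile_place (hs : Stacked a ps) (hfresh : i ∉ ps.flatten) (hx : InPile ps k x)
    (hxi : a x < a i) (hi : InPile (place a ps i) j i) : k < j := by
  induction hs generalizing k j with
  | nil => simp at hx
  | @cons p ps hp _ ih =>
    by_cases hlt : a i < a p.headI
    · exact absurd (hp x hx.mem_flatten) (by omega)
    · simp only [List.flatten_cons, List.mem_append, not_or] at hfresh
      rw [place, if_neg hlt] at hi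
      cases j with
      | zero => exact absurd (inPile_cons_zero.1 hi) hfresh.1
      | succ j =>
        cases k with
        | zero => omega
        | succ k =>
          exact Nat.succ_lt_succ (ih hfresh.2 (inPile_cons_succ.1 hx) (inPile_cons_succ.1 hi))

end Place

section PilesOf

variable {l : List ℕ} {k j x y : ℕ}

lemma pilesOf_append_singleton (l : List ℕ) (i : ℕ) :
    pilesOf a (l ++ [i]) = place a (pilesOf a l) i := by
  simp [pilesOf, List.foldl_append]

lemma flatten_pilesOf_perm (l : List ℕ) : (pilesOf a l).flatten.Perm l := by
  induction l using List.reverseRecOn with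
  | nil => simp [pilesOf]
  | append_singleton l i ih =>
    rw [pilesOf_append_singleton]
    exact (flatten_place_perm _ i).trans ((ih.cons i).trans (List.perm_append_singleton i l).symm)

lemma stacked_pilesOf (l : List ℕ) : Stacked a (pilesOf a l) := by
  induction l using List.reverseRecOn with
  | nil => exact .nil
  | append_singleton l i ih => rw [pilesOf_append_singleton]; exact ih.place

lemma inPile_pilesOf_unique (hl : l.Nodup) (hk : InPile (pilesOf a l) k x)
    (hj : InPile (pilesOf a l) j x) : k = j :=
  hk.unique ((flatten_pilesOf_perm l).nodup_iff.2 hl) hj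

theorem pile_lt_of_lt (hl : l.Pairwise (· < ·)) (hx : InPile (pilesOf a l) k x)
    (hy : InPile (pilesOf a l) j y) (hxy : x < y) (ha : a x < a y) : k < j := by
  induction l using List.reverseRecOn generalizing k j x y with
  | nil => simp [pilesOf] at hx
  | append_singleton l i ih =>
    obtain ⟨hl, -, hli⟩ := List.pairwise_append.1 hl
    have hold : ∀ z ∈ (pilesOf a l).flatten, z < i := fun z hz =>
      hli z ((flatten_pilesOf_perm l).mem_iff.1 hz) i List.mem_cons_self
    rw [pilesOf_append_singleton] at hx hy
    rcases inPile_place hx with rfl | hx'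
    · rcases inPile_place hy with rfl | hy'
      · omega
      · exact absurd (hold y hy'.mem_flatten) (by omega)
    rcases inPile_place hy with rfl | hy'
    · exact lt_of_inPile_place (stacked_pilesOf l)
        (fun h => lt_irrefl y (hold y h)) hx' ha hy
    · exact ih hl hx' hy' hxy ha

end PilesOf

end PatienceSorting

open PatienceSorting in
theorem stmt2_general (n : ℕ) (a : ℕ → ℕ)
    (I : Finset ℕ) (hI : MaxFeasible a n I)
    (i j : ℕ) (hij : i < j) (pi pj : List ℕ)
    (hpi : (pilesOf a (List.range (n + 1)))[i]? = some pi)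
    (hpj : (pilesOf a (List.range (n + 1)))[j]? = some pj)
    (u v : ℕ) (hu : u ∈ pi) (hv : v ∈ pj) (huI : u ∈ I) (hvI : v ∈ I) :
    u < v ∧ a u < a v := by
  have hfeas : Feasible a I := hI.2.1
  have hl : (List.range (n + 1)).Pairwise (· < ·) := List.pairwise_lt_range
  have hu' : InPile (pilesOf a (List.range (n + 1))) i u := ⟨pi, hpi, hu⟩
  have hv' : InPile (pilesOf a (List.range (n + 1))) j v := ⟨pj, hpj, hv⟩
  rcases lt_trichotomy u v with huv | rfl | hvu
  · exact ⟨huv, hfeas u huI v hvI huv⟩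
  · exact absurd (inPile_pilesOf_unique hl.nodup hu' hv') hij.ne
  · exact absurd (pile_lt_of_lt hl hv' hu' hvu (hfeas v hvI u huI hvu)) hij.not_gt

/-- Let `I` be a maximum feasible set for `a₀ = 0, a₁, …, aₙ` (where
`a₁, …, aₙ` are distinct integers between `1` and `n`).  If `u, v ∈ I` with
`a u` lying in pile `Pᵢ` and `a v` in pile `Pⱼ` for `i < j`, then `u ⪯_A v`,
that is, `u < v` and `a u < a v`. -/
theorem stmt2 (n : ℕ) (a : ℕ → ℕ) (hn : 0 < n) (h0 : a 0 = 0)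
    (hmem : ∀ i ∈ Finset.Icc 1 n, a i ∈ Finset.Icc 1 n)
    (hinj : ∀ i ∈ Finset.Icc 1 n, ∀ j ∈ Finset.Icc 1 n, a i = a j → i = j)
    (I : Finset ℕ) (hI : MaxFeasible a n I)
    (i j : ℕ) (hij : i < j) (pi pj : List ℕ)
    (hpi : (pilesOf a (List.range (n + 1)))[i]? = some pi)
    (hpj : (pilesOf a (List.range (n + 1)))[j]? = some pj)
    (u v : ℕ) (hu : u ∈ pi) (hv : v ∈ pj) (huI : u ∈ I) (hvI : v ∈ I) :
    u < v ∧ a u < a v :=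
  stmt2_general n a I hI i j hij pi pj hpi hpj u v hu hv huI hvI
end

section
/- Let 𝓘 be the family of maximum feasible sets of A (extended with a_0 = 0), let ⊲ be the relation on 𝓘 induced by the patience sorting piles, and for I ∈ 𝓘 let M(I) be the lower set of I in the transitive closure of ⊲. Then for every I ∈ 𝓘, the family M(I) contains exactly one ⊲-minimal set. -/
/-- `u` is placed strictly below `v` in one of the piles: some pile (a list of
indices whose head is the top) has `v` at an earlier position than `u`. -/
def Below (piles : List (List ℕ)) (u v : ℕ) : Prop :=
  ∃ p ∈ piles, ∃ k l : ℕ, k < l ∧ p[k]? = some v ∧ p[l]? = some u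

/-- The relation `I ⊲ J` on maximum feasible sets: `I \ J = {u}`,
`J \ I = {v}`, and `a u` is placed strictly below `a v` in the same pile of
the patience sorting of `a₀ = 0, a₁, …, aₙ`. -/
def PileLT (a : ℕ → ℕ) (n : ℕ) (I J : Finset ℕ) : Prop :=
  ∃ u v : ℕ, I \ J = {u} ∧ J \ I = {v} ∧
    Below (pilesOf a (List.range (n + 1))) u v

/-- One step of `⊲` within the family of maximum feasible sets. -/
def StepLT (a : ℕ → ℕ) (n : ℕ) (I J : Finset ℕ) : Prop :=
  MaxFeasible a n I ∧ MaxFeasible a n J ∧ PileLT a n I J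

/-- `J ∈ M(I)`: membership in the lower set of `I` in the transitive closure
of `⊲` within the family of maximum feasible sets; equivalently, `M(I)` is the
smallest family containing `I` and closed under taking `⊲`-smaller sets. -/
def InLowerSet (a : ℕ → ℕ) (n : ℕ) (J I : Finset ℕ) : Prop :=
  Relation.ReflTransGen (StepLT a n) J I

/-- `I` is `⊲`-minimal among maximum feasible sets. -/
def MinimalLT (a : ℕ → ℕ) (n : ℕ) (I : Finset ℕ) : Prop :=
  ∀ J : Finset ℕ, MaxFeasible a n J → ¬ PileLT a n J I

open Finset Relation

theorem WellFounded.exists_minimal_reflTransGen {α : Type*} {r : α → α → Prop}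
    (hwf : WellFounded r) (a : α) : ∃ b, ReflTransGen r b a ∧ ∀ c, ¬ r c b := by
  induction a using hwf.induction with
  | _ a ih =>
    by_cases h : ∃ c, r c a
    · obtain ⟨c, hc⟩ := h
      obtain ⟨b, hb, hmin⟩ := ih c hc
      exact ⟨b, hb.tail hc, hmin⟩
    · simp only [not_exists] at h
      exact ⟨a, .refl, h⟩

theorem Relation.eq_of_reflTransGen_of_minimal {α : Type*} {r : α → α → Prop}
    (h : ∀ a b c, r b a → r c a → ∃ d, ReflGen r d b ∧ ReflTransGen r d c) {a b c : α}
    (hb : ReflTransGen r b a) (hc : ReflTransGen r c a)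
    (hbmin : ∀ d, ¬ r d b) (hcmin : ∀ d, ¬ r d c) : b = c := by
  have h' : ∀ a b c, Function.swap r a b → Function.swap r a c →
      ∃ d, ReflGen (Function.swap r) b d ∧ ReflTransGen (Function.swap r) c d := by
    intro a b c hab hac
    obtain ⟨d, hdb, hdc⟩ := h a b c hab hac
    refine ⟨d, ?_, reflTransGen_swap.mpr hdc⟩
    cases hdb with
    | refl => exact .refl
    | single hdb => exact .single hdb
  obtain ⟨d, hbd, hcd⟩ := church_rosser h' (reflTransGen_swap.mpr hb) (reflTransGen_swap.mpr hc)
  have stuck : ∀ {x}, (∀ e, ¬ r e x) → ReflTransGen (Function.swap r) x d → x = d :=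
    fun hmin hxd => hxd.cases_head.resolve_right fun ⟨e, he, _⟩ => hmin e he
  rw [stuck hbmin hbd, stuck hcmin hcd]

def Supports (a : ℕ → ℕ) (p q : List ℕ) : Prop :=
  ∀ y ∈ q, ∃ x ∈ p, x < y ∧ a x < a y

structure PilesInv (a : ℕ → ℕ) (P : List (List ℕ)) : Prop where
  ne_nil : ∀ p ∈ P, p ≠ []
  sorted : ∀ p ∈ P, p.Pairwise fun x y => y < x ∧ a x < a y
  chain : P.IsChain (Supports a)

section PatienceSorting

variable {a : ℕ → ℕ}

theorem flatten_place_perm (P : List (List ℕ)) (i : ℕ) :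
    (place a P i).flatten.Perm (i :: P.flatten) := by
  induction P with
  | nil => simp [place]
  | cons p ps ih =>
    rw [place]
    split_ifs
    · simp
    · simpa using (ih.append_left p).trans List.perm_middle

theorem mem_head?_place {P : List (List ℕ)} {i : ℕ} {q : List ℕ}
    (hq : q ∈ (place a P i).head?) {y : ℕ} (hy : y ∈ q) : y = i ∨ ∃ p ∈ P.head?, y ∈ p := by
  cases P with
  | nil =>
    obtain rfl : [i] = q := by simpa [place] using hq
    simp_all
  | cons p ps =>
    rw [place] at hq
    split_ifs at hq <;> simp only [List.head?_cons, Option.mem_def, Option.some.injEq] at hq <;>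
      subst hq <;> simp_all

theorem le_of_mem_of_sorted {p : List ℕ} (hp : p.Pairwise fun x y => y < x ∧ a x < a y)
    {y : ℕ} (hy : y ∈ p) : a p.headI ≤ a y := by
  cases p with
  | nil => simp at hy
  | cons x t =>
    rcases List.mem_cons.mp hy with rfl | hy
    · rfl
    · exact ((List.pairwise_cons.mp hp).1 y hy).2.le

theorem pilesInv_place {P : List (List ℕ)} {i : ℕ} (hP : PilesInv a P)
    (hlt : ∀ x ∈ P.flatten, x < i) (hne : ∀ x ∈ P.flatten, a x ≠ a i) :
    PilesInv a (place a P i) := by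
  induction P with
  | nil => exact ⟨by simp [place], by simp [place], by simp [place]⟩
  | cons p ps ih =>
    have hsorted := hP.sorted p (by simp)
    have htop : p.headI ∈ p := by
      cases p with
      | nil => exact absurd rfl (hP.ne_nil [] (by simp))
      | cons x t => simp
    have hchain := List.isChain_cons.mp hP.chain
    rw [place]
    split_ifs with h
    · refine ⟨?_, ?_, ?_⟩
      · simpa using fun q hq => hP.ne_nil q (by simp [hq])
      · simp only [List.mem_cons, forall_eq_or_imp]
        refine ⟨List.Pairwise.cons (fun y hy => ⟨hlt y (by simp [hy]), ?_⟩) hsorted,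
          fun q hq => hP.sorted q (by simp [hq])⟩
        exact h.trans_le (le_of_mem_of_sorted hsorted hy)
      · refine List.isChain_cons.mpr ⟨fun q hq y hy => ?_, hchain.2⟩
        obtain ⟨x, hx, hxy⟩ := hchain.1 q hq y hy
        exact ⟨x, List.mem_cons_of_mem i hx, hxy⟩
    · have hps : PilesInv a ps :=
        ⟨fun q hq => hP.ne_nil q (by simp [hq]), fun q hq => hP.sorted q (by simp [hq]),
          hchain.2⟩
      have ih' := ih hps (fun x hx => hlt x (by simp [hx])) (fun x hx => hne x (by simp [hx]))
      have htop_lt : p.headI < i ∧ a p.headI < a i :=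
        ⟨hlt _ (by simp [htop]), lt_of_le_of_ne (not_lt.mp h) (hne _ (by simp [htop]))⟩
      refine ⟨?_, ?_, ?_⟩
      · simpa using ⟨hP.ne_nil p (by simp), ih'.ne_nil⟩
      · simpa using ⟨hsorted, ih'.sorted⟩
      · refine List.isChain_cons.mpr ⟨fun q hq y hy => ?_, ih'.chain⟩
        rcases mem_head?_place hq hy with rfl | ⟨p', hp', hy'⟩
        · exact ⟨p.headI, htop, htop_lt⟩
        · exact hchain.1 p' hp' y hy'

theorem pilesOf_range_succ (m : ℕ) :
    pilesOf a (List.range (m + 1)) = place a (pilesOf a (List.range m)) m := by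
  rw [pilesOf, List.range_succ, List.foldl_append]
  rfl

theorem flatten_pilesOf_range_perm (m : ℕ) :
    (pilesOf a (List.range m)).flatten.Perm (List.range m) := by
  induction m with
  | zero => simp [pilesOf]
  | succ m ih =>
    rw [pilesOf_range_succ, List.range_succ]
    exact ((flatten_place_perm _ m).trans (ih.cons m)).trans
      (List.perm_append_singleton m _).symm

theorem pilesInv_pilesOf_range {m : ℕ} (hinj : Set.InjOn a (Set.Iio m)) :
    PilesInv a (pilesOf a (List.range m)) := by
  induction m with
  | zero => exact ⟨by simp [pilesOf], by simp [pilesOf], by simp [pilesOf]⟩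
  | succ m ih =>
    have hlt : ∀ x ∈ (pilesOf a (List.range m)).flatten, x < m := fun x hx =>
      List.mem_range.mp ((flatten_pilesOf_range_perm m).subset hx)
    rw [pilesOf_range_succ]
    refine pilesInv_place (ih (hinj.mono (Set.Iio_subset_Iio m.le_succ))) hlt
      fun x hx hax => (hlt x hx).ne ?_
    exact hinj (Set.mem_Iio.mpr ((hlt x hx).trans m.lt_succ_self)) m.lt_succ_self hax

end PatienceSorting

section PileGeometry

variable {a : ℕ → ℕ} {P : List (List ℕ)}

theorem PilesInv.strictAntiOn (hP : PilesInv a P) {p : List ℕ} (hp : p ∈ P) :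
    StrictAntiOn a {x | x ∈ p} := by
  intro x hx y hy hxy
  obtain ⟨k, hk, rfl⟩ := List.mem_iff_getElem.mp hx
  obtain ⟨l, hl, rfl⟩ := List.mem_iff_getElem.mp hy
  have hsorted := List.pairwise_iff_getElem.mp (hP.sorted p hp)
  rcases lt_trichotomy k l with hkl | rfl | hlk
  · exact absurd hxy (hsorted k l hk hl hkl).1.not_gt
  · exact absurd hxy (lt_irrefl _)
  · exact (hsorted l k hl hk hlk).2

theorem PilesInv.exists_le_of_mem (hP : PilesInv a P) {i j : ℕ} (hji : j ≤ i)
    (hi : i < P.length) {x : ℕ} (hx : x ∈ P[i]) : ∃ z ∈ P[j], z ≤ x ∧ a z ≤ a x := by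
  induction i generalizing x with
  | zero =>
    obtain rfl := Nat.le_zero.mp hji
    exact ⟨x, hx, le_rfl, le_rfl⟩
  | succ i ih =>
    rcases hji.eq_or_lt with rfl | hji
    · exact ⟨x, hx, le_rfl, le_rfl⟩
    · obtain ⟨y, hy, hyx, hayx⟩ := List.isChain_iff_getElem.mp hP.chain i hi x hx
      obtain ⟨z, hz, hzy, hazy⟩ := ih (Nat.le_of_lt_succ hji) (by omega) hy
      exact ⟨z, hz, hzy.trans hyx.le, hazy.trans hayx.le⟩

theorem PilesInv.lt_of_mem (hP : PilesInv a P) {i j : ℕ} {hi : i < P.length}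
    {hj : j < P.length} {x y : ℕ} (hx : x ∈ P[i]) (hy : y ∈ P[j]) (hxy : x < y)
    (haxy : a x < a y) : i < j := by
  by_contra! hji
  obtain ⟨z, hz, hzx, hazx⟩ := hP.exists_le_of_mem hji hi hx
  exact (hP.strictAntiOn (List.getElem_mem hj) hz hy (hzx.trans_lt hxy)).not_gt
    (hazx.trans_lt haxy)

theorem PilesInv.below (hP : PilesInv a P) {u v : ℕ} (h : Below P u v) :
    u < v ∧ a v < a u ∧ ∃ i, ∃ hi : i < P.length, u ∈ P[i] ∧ v ∈ P[i] := by
  obtain ⟨p, hp, k, l, hkl, hk, hl⟩ := h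
  obtain ⟨hk', rfl⟩ := List.getElem?_eq_some_iff.mp hk
  obtain ⟨hl', rfl⟩ := List.getElem?_eq_some_iff.mp hl
  obtain ⟨i, hi, rfl⟩ := List.mem_iff_getElem.mp hp
  exact ⟨(List.pairwise_iff_getElem.mp (hP.sorted _ hp) k l hk' hl' hkl).1,
    (List.pairwise_iff_getElem.mp (hP.sorted _ hp) k l hk' hl' hkl).2,
    i, hi, List.getElem_mem _, List.getElem_mem _⟩

theorem eq_of_mem_of_nodup_flatten {α : Type*} {P : List (List α)} (hnd : P.flatten.Nodup)
    {p q : List α} (hp : p ∈ P) (hq : q ∈ P) {x : α} (hxp : x ∈ p) (hxq : x ∈ q) : p = q := by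
  by_contra hpq
  have : Std.Symm (List.Disjoint (α := α)) := ⟨fun _ _ h => h.symm⟩
  exact (List.nodup_flatten.mp hnd).2.forall hp hq hpq hxp hxq

theorem below_or_below (hnd : P.flatten.Nodup) {u₁ u₂ v : ℕ} (h₁ : Below P u₁ v)
    (h₂ : Below P u₂ v) (hu : u₁ ≠ u₂) : Below P u₁ u₂ ∨ Below P u₂ u₁ := by
  obtain ⟨p, hp, k₁, l₁, -, hk₁, hl₁⟩ := h₁
  obtain ⟨q, hq, k₂, l₂, -, hk₂, hl₂⟩ := h₂
  obtain rfl := eq_of_mem_of_nodup_flatten hnd hp hq (List.mem_of_getElem? hk₁)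
    (List.mem_of_getElem? hk₂)
  rcases lt_or_gt_of_ne (fun h : l₁ = l₂ => hu (by simpa [h, hl₂] using hl₁.symm)) with hl | hl
  · exact Or.inr ⟨p, hp, l₁, l₂, hl, hl₁, hl₂⟩
  · exact Or.inl ⟨p, hp, l₂, l₁, hl, hl₂, hl₁⟩

theorem PilesInv.strictMonoOn_pair (hP : PilesInv a P) {u₁ v₁ u₂ v₂ : ℕ}
    (h₁ : Below P u₁ v₁) (h₂ : Below P u₂ v₂) (hu₁v₂ : u₁ ≠ v₂) (hu₂v₁ : u₂ ≠ v₁)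
    (h₁₂ : StrictMonoOn a {u₁, v₂}) (h₂₁ : StrictMonoOn a {u₂, v₁}) :
    StrictMonoOn a {u₁, u₂} := by
  obtain ⟨hu₁, hav₁, i, hi, hu₁i, hv₁i⟩ := hP.below h₁
  obtain ⟨hu₂, hav₂, j, hj, hu₂j, hv₂j⟩ := hP.below h₂
  have comparable : ∀ {x y : ℕ}, StrictMonoOn a {x, y} → x ≠ y →
      (x < y ∧ a x < a y) ∨ (y < x ∧ a y < a x) := by
    intro x y hxy hne
    rcases lt_or_gt_of_ne hne with h | h
    · exact Or.inl ⟨h, hxy (by simp) (by simp) h⟩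
    · exact Or.inr ⟨h, hxy (by simp) (by simp) h⟩
  have : (u₁ < u₂ ∧ a u₁ < a u₂) ∨ (u₂ < u₁ ∧ a u₂ < a u₁) := by
    rcases comparable h₂₁ hu₂v₁ with h | h <;> rcases comparable h₁₂ hu₁v₂ with h' | h'
    · exact absurd (hP.lt_of_mem hu₂j hv₁i h.1 h.2) (hP.lt_of_mem hu₁i hv₂j h'.1 h'.2).not_gt
    · omega
    · omega
    · exact absurd (hP.lt_of_mem hv₁i hu₂j h.1 h.2) (hP.lt_of_mem hv₂j hu₁i h'.1 h'.2).not_gt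
  intro x hx y hy hxy
  simp only [Set.mem_insert_iff, Set.mem_singleton_iff] at hx hy
  rcases hx with rfl | rfl <;> rcases hy with rfl | rfl <;> omega

end PileGeometry

section MaxFeasible

variable {a : ℕ → ℕ} {n : ℕ}

theorem Feasible.strictMonoOn {J : Finset ℕ} (h : Feasible a J) : StrictMonoOn a (J : Set ℕ) :=
  fun x hx y hy => h x hx y hy

theorem feasible_of_erase_subset {J₁ J₂ K : Finset ℕ} {u₁ u₂ : ℕ} (hJ₁ : Feasible a J₁)
    (hJ₂ : Feasible a J₂) (h₁ : K.erase u₂ ⊆ J₁) (h₂ : K.erase u₁ ⊆ J₂)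
    (hu : u₁ ≠ u₂) (h₁₂ : StrictMonoOn a {u₁, u₂}) : Feasible a K := by
  intro x hx y hy hxy
  by_cases hA : x ≠ u₂ ∧ y ≠ u₂
  · exact hJ₁ x (h₁ (mem_erase.mpr ⟨hA.1, hx⟩)) y (h₁ (mem_erase.mpr ⟨hA.2, hy⟩)) hxy
  by_cases hB : x ≠ u₁ ∧ y ≠ u₁
  · exact hJ₂ x (h₂ (mem_erase.mpr ⟨hB.1, hx⟩)) y (h₂ (mem_erase.mpr ⟨hB.2, hy⟩)) hxy
  exact h₁₂ (by simp only [Set.mem_insert_iff, Set.mem_singleton_iff]; omega)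
    (by simp only [Set.mem_insert_iff, Set.mem_singleton_iff]; omega) hxy

theorem card_insert_erase {α : Type*} [DecidableEq α] {J : Finset α} {u v : α} (hu : u ∉ J)
    (hv : v ∈ J) : (insert u (J.erase v)).card = J.card := by
  rw [card_insert_of_notMem fun h => hu (mem_of_mem_erase h), card_erase_add_one hv]

theorem MaxFeasible.of_card_le {J K : Finset ℕ} (hJ : MaxFeasible a n J)
    (hK : K ⊆ range (n + 1)) (hKf : Feasible a K) (hcard : J.card ≤ K.card) :
    MaxFeasible a n K :=
  ⟨hK, hKf, fun J' hJ' hf => (hJ.2.2 J' hJ' hf).trans hcard⟩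

theorem sdiff_eq_singleton_and_sdiff_eq_singleton_iff {α : Type*} [DecidableEq α]
    {J' J : Finset α} {u v : α} :
    J' \ J = {u} ∧ J \ J' = {v} ↔ u ∉ J ∧ v ∈ J ∧ J' = insert u (J.erase v) := by
  constructor
  · rintro ⟨h₁, h₂⟩
    have e₁ := Finset.ext_iff.mp h₁
    have e₂ := Finset.ext_iff.mp h₂
    simp only [mem_sdiff, mem_singleton] at e₁ e₂
    refine ⟨((e₁ u).mpr rfl).2, ((e₂ v).mpr rfl).1, ?_⟩
    ext x
    simp only [mem_insert, mem_erase]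
    grind
  · rintro ⟨hu, hv, rfl⟩
    constructor <;> ext x <;> simp only [mem_sdiff, mem_insert, mem_erase, mem_singleton] <;>
      grind

theorem pileLT_iff {J' J : Finset ℕ} :
    PileLT a n J' J ↔ ∃ u v, u ∉ J ∧ v ∈ J ∧ J' = insert u (J.erase v) ∧
      Below (pilesOf a (List.range (n + 1))) u v := by
  simp only [PileLT, ← and_assoc, sdiff_eq_singleton_and_sdiff_eq_singleton_iff]

end MaxFeasible

section Confluence

variable {a : ℕ → ℕ} {n : ℕ}

theorem PilesInv.sum_lt_of_stepLT (hP : PilesInv a (pilesOf a (List.range (n + 1))))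
    {J' J : Finset ℕ} (h : StepLT a n J' J) : ∑ x ∈ J, a x < ∑ x ∈ J', a x := by
  obtain ⟨u, v, hu, hv, rfl, hb⟩ := pileLT_iff.mp h.2.2
  rw [sum_insert fun h => hu (mem_of_mem_erase h), ← sum_erase_add J a hv]
  have := (hP.below hb).2.1
  omega

theorem PilesInv.wellFounded_stepLT (hP : PilesInv a (pilesOf a (List.range (n + 1)))) :
    WellFounded (StepLT a n) := by
  let deficit (J : Finset ℕ) := ∑ x ∈ range (n + 1), a x - ∑ x ∈ J, a x
  refine Subrelation.wf (fun {J' J} h => ?_) (InvImage.wf deficit wellFounded_lt)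
  have hlt := hP.sum_lt_of_stepLT h
  have hle := sum_le_sum_of_subset (f := a) h.1.1
  show deficit J' < deficit J
  simp only [deficit]
  omega

theorem PilesInv.exists_stepLT_stepLT (hP : PilesInv a (pilesOf a (List.range (n + 1))))
    {J : Finset ℕ} {u₁ v₁ u₂ v₂ : ℕ} (hJ₁ : MaxFeasible a n (insert u₁ (J.erase v₁)))
    (hJ₂ : MaxFeasible a n (insert u₂ (J.erase v₂))) (hu₁ : u₁ ∉ J) (hu₂ : u₂ ∉ J)
    (hv₁ : v₁ ∈ J) (hv₂ : v₂ ∈ J) (hu : u₁ ≠ u₂) (hv : v₁ ≠ v₂)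
    (hb₁ : Below (pilesOf a (List.range (n + 1))) u₁ v₁)
    (hb₂ : Below (pilesOf a (List.range (n + 1))) u₂ v₂) :
    ∃ K, StepLT a n K (insert u₁ (J.erase v₁)) ∧ StepLT a n K (insert u₂ (J.erase v₂)) := by
  set J₁ := insert u₁ (J.erase v₁)
  set J₂ := insert u₂ (J.erase v₂)
  set K := insert u₁ (insert u₂ ((J.erase v₁).erase v₂))
  have hu₁v₂ : u₁ ≠ v₂ := by grind
  have hu₂v₁ : u₂ ≠ v₁ := by grind
  have hu₂J₁ : u₂ ∉ J₁ := by grind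
  have hv₂J₁ : v₂ ∈ J₁ := by grind
  have hu₁J₂ : u₁ ∉ J₂ := by grind
  have hv₁J₂ : v₁ ∈ J₂ := by grind
  have hK₁ : K = insert u₂ (J₁.erase v₂) := by ext; grind
  have hK₂ : K = insert u₁ (J₂.erase v₁) := by ext; grind
  have h₁₂ : StrictMonoOn a {u₁, u₂} :=
    hP.strictMonoOn_pair hb₁ hb₂ hu₁v₂ hu₂v₁
      (hJ₁.2.1.strictMonoOn.mono (by grind))
      (hJ₂.2.1.strictMonoOn.mono (by grind))
  have hKmax : MaxFeasible a n K := by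
    refine hJ₁.of_card_le ?_ ?_ ?_
    · rw [hK₁]
      exact insert_subset (hJ₂.1 (mem_insert_self _ _)) ((erase_subset _ _).trans hJ₁.1)
    · refine feasible_of_erase_subset hJ₁.2.1 hJ₂.2.1 ?_ ?_ hu h₁₂
      · rw [hK₁]
        exact (erase_insert_subset _ _).trans (erase_subset _ _)
      · rw [hK₂]
        exact (erase_insert_subset _ _).trans (erase_subset _ _)
    · rw [hK₁, card_insert_erase hu₂J₁ hv₂J₁]
  exact ⟨K, ⟨hKmax, hJ₁, pileLT_iff.mpr ⟨u₂, v₂, hu₂J₁, hv₂J₁, hK₁, hb₂⟩⟩,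
    ⟨hKmax, hJ₂, pileLT_iff.mpr ⟨u₁, v₁, hu₁J₂, hv₁J₂, hK₂, hb₁⟩⟩⟩

theorem PilesInv.stepLT_diamond (hP : PilesInv a (pilesOf a (List.range (n + 1))))
    (hnd : (pilesOf a (List.range (n + 1))).flatten.Nodup) {J J₁ J₂ : Finset ℕ}
    (h₁ : StepLT a n J₁ J) (h₂ : StepLT a n J₂ J) :
    ∃ K, ReflGen (StepLT a n) K J₁ ∧ ReflTransGen (StepLT a n) K J₂ := by
  obtain ⟨hJ₁, hJ, hp₁⟩ := h₁
  obtain ⟨hJ₂, -, hp₂⟩ := h₂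
  obtain ⟨u₁, v₁, hu₁, hv₁, rfl, hb₁⟩ := pileLT_iff.mp hp₁
  obtain ⟨u₂, v₂, hu₂, hv₂, rfl, hb₂⟩ := pileLT_iff.mp hp₂
  rcases eq_or_ne v₁ v₂ with rfl | hv <;> rcases eq_or_ne u₁ u₂ with rfl | hu
  · exact ⟨_, .refl, .refl⟩
  · rcases below_or_below hnd hb₁ hb₂ hu with hb | hb
    · refine ⟨_, .refl, .single ⟨hJ₁, hJ₂, pileLT_iff.mpr ⟨u₁, u₂, ?_, ?_, ?_, hb⟩⟩⟩ <;>
        grind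
    · refine ⟨_, .single ⟨hJ₂, hJ₁, pileLT_iff.mpr ⟨u₂, u₁, ?_, ?_, ?_, hb⟩⟩, .refl⟩ <;>
        grind
  · exfalso
    obtain ⟨-, -, i, hi, hu₁i, hv₁i⟩ := hP.below hb₁
    obtain ⟨-, -, j, hj, hu₁j, hv₂j⟩ := hP.below hb₂
    have hij := eq_of_mem_of_nodup_flatten hnd (List.getElem_mem hi) (List.getElem_mem hj)
      hu₁i hu₁j
    rw [← hij] at hv₂j
    -- `v₁` and `v₂` share the pile of `u₁`, which carries no increasing pair of `J`
    rcases lt_or_gt_of_ne hv with h | h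
    · exact (hP.strictAntiOn (List.getElem_mem hi) hv₁i hv₂j h).not_gt (hJ.2.1 _ hv₁ _ hv₂ h)
    · exact (hP.strictAntiOn (List.getElem_mem hi) hv₂j hv₁i h).not_gt (hJ.2.1 _ hv₂ _ hv₁ h)
  · obtain ⟨K, hK₁, hK₂⟩ :=
      hP.exists_stepLT_stepLT hJ₁ hJ₂ hu₁ hu₂ hv₁ hv₂ hu hv hb₁ hb₂
    exact ⟨K, .single hK₁, .single hK₂⟩

end Confluence

theorem injOn_Iio_succ {n : ℕ} {a : ℕ → ℕ} (h0 : a 0 = 0)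
    (hmem : ∀ i ∈ Icc 1 n, a i ∈ Icc 1 n)
    (hinj : ∀ i ∈ Icc 1 n, ∀ j ∈ Icc 1 n, a i = a j → i = j) :
    Set.InjOn a (Set.Iio (n + 1)) := by
  have hpos : ∀ i, i < n + 1 → 0 < i → 0 < a i := fun i hi hi0 =>
    (mem_Icc.mp (hmem i (mem_Icc.mpr ⟨hi0, by omega⟩))).1
  intro i hi j hj hij
  simp only [Set.mem_Iio] at hi hj
  rcases Nat.eq_zero_or_pos i with rfl | hi0 <;> rcases Nat.eq_zero_or_pos j with rfl | hj0
  · rfl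
  · have := hpos j hj hj0
    omega
  · have := hpos i hi hi0
    omega
  · exact hinj i (mem_Icc.mpr ⟨hi0, by omega⟩) j (mem_Icc.mpr ⟨hj0, by omega⟩) hij

theorem stmt8_general (n : ℕ) (a : ℕ → ℕ) (h0 : a 0 = 0)
    (hmem : ∀ i ∈ Finset.Icc 1 n, a i ∈ Finset.Icc 1 n)
    (hinj : ∀ i ∈ Finset.Icc 1 n, ∀ j ∈ Finset.Icc 1 n, a i = a j → i = j)
    (I : Finset ℕ) (hI : MaxFeasible a n I) :
    ∃! K : Finset ℕ, MaxFeasible a n K ∧ InLowerSet a n K I ∧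
      MinimalLT a n K := by
  have hP := pilesInv_pilesOf_range (injOn_Iio_succ h0 hmem hinj)
  have hnd := (flatten_pilesOf_range_perm (a := a) (n + 1)).nodup_iff.mpr List.nodup_range
  have lower_maxFeasible : ∀ {K}, InLowerSet a n K I → MaxFeasible a n K := fun hKI =>
    hKI.cases_head.elim (· ▸ hI) fun ⟨_, hK, _⟩ => hK.1
  obtain ⟨K, hKI, hKmin⟩ := hP.wellFounded_stepLT.exists_minimal_reflTransGen I
  have hKmax := lower_maxFeasible hKI
  refine ⟨K, ⟨hKmax, hKI, fun J hJ hJK => hKmin J ⟨hJ, hKmax, hJK⟩⟩,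
    fun K' ⟨_, hK'I, hK'min⟩ => ?_⟩
  exact eq_of_reflTransGen_of_minimal (fun _ _ _ => hP.stepLT_diamond hnd) hK'I hKI
    (fun J hJ => hK'min J hJ.1 hJ.2.2) hKmin

/-- For every maximum feasible set `I`, the lower set `M(I)` of `I` in the
transitive closure of `⊲` contains exactly one `⊲`-minimal set. -/
theorem stmt8 (n : ℕ) (a : ℕ → ℕ) (hn : 0 < n) (h0 : a 0 = 0)
    (hmem : ∀ i ∈ Finset.Icc 1 n, a i ∈ Finset.Icc 1 n)
    (hinj : ∀ i ∈ Finset.Icc 1 n, ∀ j ∈ Finset.Icc 1 n, a i = a j → i = j)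
    (I : Finset ℕ) (hI : MaxFeasible a n I) :
    ∃! K : Finset ℕ, MaxFeasible a n K ∧ InLowerSet a n K I ∧
      MinimalLT a n K :=
  stmt8_general n a h0 hmem hinj I hI
end

section
/- Let 𝓘 be the family of maximum feasible sets of A (extended with a_0 = 0). For I, J ∈ 𝓘, there exists a reconfiguration sequence between I and J if and only if I and J are ⊲-equivalent, i.e., the unique ⊲-minimal set of M(I) equals the unique ⊲-minimal set of M(J). -/
/-- One reconfiguration step: `J` is obtained from `I` by simultaneously
adding an element `j ∉ I` and removing an element `k ∈ I`. -/
def ReconStep (I J : Finset ℕ) : Prop :=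
  ∃ j k : ℕ, j ∉ I ∧ k ∈ I ∧ J = insert j I \ {k}

/-- `f 0, f 1, …, f ℓ` is a reconfiguration sequence of feasible sets
(subsets of the index universe `S`), each obtained from the previous one by a
single exchange step. -/
def ReconSeq (a : ℕ → ℕ) (S : Finset ℕ) (ℓ : ℕ) (f : ℕ → Finset ℕ) : Prop :=
  (∀ i ≤ ℓ, f i ⊆ S ∧ Feasible a (f i)) ∧
    ∀ i < ℓ, ReconStep (f i) (f (i + 1))

/-!
Patience sorting puts `x` on pile `s` exactly when a longest increasing subsequence ending
at `x` has length `s + 1`. Hence a maximum feasible set takes one element from every pile,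
in pile order, and an exchange between two maximum feasible sets must swap two elements of
one pile: every reconfiguration step is a `⊲`-step in one direction or the other.

`I ⊲ J` lowers the index sum, so every `M(I)` has a `⊲`-minimal element. Two sets `J₁, J₂ ⊲ I`
obtained by exchanges in different piles have the common lower bound that performs both
exchanges, while exchanges in the same pile make `J₁` and `J₂` comparable. By Church–Rosser,
having a common lower bound is then an equivalence relation, and it is the equivalence
generated by reconfiguration steps.
-/

open Relation Function

theorem lt_length_of_mem_getD {α : Type*} {l : List (List α)} {s : ℕ} {x : α}
    (hx : x ∈ l.getD s []) : s < l.length := by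
  by_contra! hs
  rw [List.getD_eq_default _ _ hs] at hx
  exact List.not_mem_nil hx

theorem headI_mem_getD {α : Type*} [Inhabited α] {l : List (List α)} {s : ℕ}
    (hne : l.getD s [] ≠ []) : (l.getD s []).headI ∈ l.getD s [] := by
  cases h : l.getD s [] with
  | nil => exact absurd h hne
  | cons y ys => simp

theorem exists_getElem?_lt_iff_of_pairwise_gt {α : Type*} [Preorder α] {l : List α}
    (hl : l.Pairwise (· > ·)) {u v : α} :
    (∃ k k' : ℕ, k < k' ∧ l[k]? = some v ∧ l[k']? = some u) ↔ u ∈ l ∧ v ∈ l ∧ u < v := by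
  constructor
  · rintro ⟨k, k', hkk', hk, hk'⟩
    obtain ⟨hk, rfl⟩ := List.getElem?_eq_some_iff.1 hk
    obtain ⟨hk', rfl⟩ := List.getElem?_eq_some_iff.1 hk'
    exact ⟨List.getElem_mem _, List.getElem_mem _, List.pairwise_iff_getElem.1 hl _ _ _ _ hkk'⟩
  · rintro ⟨hu, hv, huv⟩
    obtain ⟨k', hk', rfl⟩ := List.mem_iff_getElem.1 hu
    obtain ⟨k, hk, rfl⟩ := List.mem_iff_getElem.1 hv
    refine ⟨k, k', ?_, List.getElem?_eq_getElem hk, List.getElem?_eq_getElem hk'⟩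
    rcases lt_trichotomy k k' with h | rfl | h
    · exact h
    · exact absurd huv (lt_irrefl _)
    · exact absurd (List.pairwise_iff_getElem.1 hl _ _ _ _ h) huv.not_gt

section Exchange

variable {α : Type*} [DecidableEq α] {I J J₁ J₂ : Finset α} {u v u₁ v₁ u₂ v₂ : α}

theorem card_eq_of_sdiff_eq_singleton (hIJ : I \ J = {u}) (hJI : J \ I = {v}) :
    I.card = J.card := by
  rw [← Finset.card_inter_add_card_sdiff I J, ← Finset.card_inter_add_card_sdiff J I, hIJ, hJI,
    Finset.inter_comm]
  rfl

theorem sum_lt_sum_of_sdiff_eq_singleton {M : Type*} [AddCommMonoid M] [PartialOrder M]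
    [IsOrderedCancelAddMonoid M] {f : α → M} (hIJ : I \ J = {u}) (hJI : J \ I = {v})
    (h : f u < f v) : ∑ i ∈ I, f i < ∑ i ∈ J, f i := by
  rw [← Finset.sum_inter_add_sum_sdiff I J, ← Finset.sum_inter_add_sum_sdiff J I, hIJ, hJI,
    Finset.inter_comm, Finset.sum_singleton, Finset.sum_singleton]
  exact add_lt_add_right h _

theorem mem_of_sdiff_eq_singleton {x : α} (h : I \ J = {u}) (hx : x ∈ I) (hxu : x ≠ u) :
    x ∈ J := by
  by_contra hxJ
  exact hxu (Finset.mem_singleton.1 (h ▸ Finset.mem_sdiff.2 ⟨hx, hxJ⟩))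

theorem eq_of_sdiff_eq_singleton (h₁ : J₁ \ I = {u₁}) (h₁' : I \ J₁ = {v₁})
    (h₂ : J₂ \ I = {u₁}) (h₂' : I \ J₂ = {v₁}) : J₁ = J₂ := by
  simp only [Finset.ext_iff, Finset.mem_sdiff, Finset.mem_singleton] at *
  grind

theorem sdiff_eq_singleton_of_sdiff_eq_singleton (h₁ : J₁ \ I = {u₁}) (h₁' : I \ J₁ = {v₁})
    (h₂ : J₂ \ I = {u₂}) (h₂' : I \ J₂ = {v₁}) (hu : u₁ ≠ u₂) : J₁ \ J₂ = {u₁} := by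
  simp only [Finset.ext_iff, Finset.mem_sdiff, Finset.mem_singleton] at *
  grind

theorem exists_sdiff_eq_singleton_of_sdiff_eq_singleton (h₁ : J₁ \ I = {u₁})
    (h₁' : I \ J₁ = {v₁}) (h₂ : J₂ \ I = {u₂}) (h₂' : I \ J₂ = {v₂}) (hu : u₁ ≠ u₂)
    (hv : v₁ ≠ v₂) :
    ∃ K : Finset α, K \ J₁ = {u₂} ∧ J₁ \ K = {v₂} ∧ K \ J₂ = {u₁} ∧ J₂ \ K = {v₁} := by
  refine ⟨insert u₂ (J₁.erase v₂), ?_⟩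
  simp only [Finset.ext_iff, Finset.mem_sdiff, Finset.mem_singleton, Finset.mem_insert,
    Finset.mem_erase] at *
  refine ⟨?_, ?_, ?_, ?_⟩ <;> grind

end Exchange

theorem reconStep_iff_exists_sdiff_eq {I J : Finset ℕ} :
    ReconStep I J ↔ ∃ j k, J \ I = {j} ∧ I \ J = {k} := by
  constructor
  · rintro ⟨j, k, hj, hk, rfl⟩
    refine ⟨j, k, ?_, ?_⟩ <;> ext x <;>
      simp only [Finset.mem_sdiff, Finset.mem_insert, Finset.mem_singleton] <;> grind
  · rintro ⟨j, k, hj, hk⟩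
    simp only [Finset.ext_iff, Finset.mem_sdiff, Finset.mem_singleton] at hj hk
    refine ⟨j, k, by grind, by grind, ?_⟩
    ext x
    simp only [Finset.mem_sdiff, Finset.mem_insert, Finset.mem_singleton]
    grind

theorem ReconStep.symm {I J : Finset ℕ} (h : ReconStep I J) : ReconStep J I := by
  obtain ⟨j, k, hj, hk⟩ := reconStep_iff_exists_sdiff_eq.1 h
  exact reconStep_iff_exists_sdiff_eq.2 ⟨k, j, hk, hj⟩

theorem ReconStep.card_eq {I J : Finset ℕ} (h : ReconStep I J) : I.card = J.card := by
  obtain ⟨j, k, hj, hk⟩ := reconStep_iff_exists_sdiff_eq.1 h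
  exact card_eq_of_sdiff_eq_singleton hk hj

theorem Feasible.insert {a : ℕ → ℕ} {F : Finset ℕ} (hF : Feasible a F) {x : ℕ}
    (hx : ∀ y ∈ F, y < x ∧ a y < a x) : Feasible a (insert x F) := by
  intro i hi j hj hij
  rcases Finset.mem_insert.1 hi with hi | hi <;> rcases Finset.mem_insert.1 hj with hj | hj
  · exact absurd (hi.trans hj.symm) hij.ne
  · exact absurd (hx j hj).1 (hi ▸ hij).not_gt
  · exact hj ▸ (hx i hi).2
  · exact hF i hi j hj hij

theorem Feasible.of_sdiff_eq_singleton {a : ℕ → ℕ} {K J₁ J₂ : Finset ℕ} {x y : ℕ}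
    (hJ₁ : Feasible a J₁) (hJ₂ : Feasible a J₂) (h₁ : K \ J₁ = {y}) (h₂ : K \ J₂ = {x})
    (hxy : x < y ∧ a x < a y) : Feasible a K := by
  unfold Feasible at *
  simp only [Finset.ext_iff, Finset.mem_sdiff, Finset.mem_singleton] at *
  grind

def FeasibleReconStep (a : ℕ → ℕ) (S I J : Finset ℕ) : Prop :=
  (I ⊆ S ∧ Feasible a I) ∧ (J ⊆ S ∧ Feasible a J) ∧ ReconStep I J

theorem FeasibleReconStep.symm {a : ℕ → ℕ} {S I J : Finset ℕ} (h : FeasibleReconStep a S I J) :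
    FeasibleReconStep a S J I :=
  ⟨h.2.1, h.1, h.2.2.symm⟩

theorem exists_reconSeq_iff_reflTransGen {a : ℕ → ℕ} {S I J : Finset ℕ}
    (hI : I ⊆ S ∧ Feasible a I) :
    (∃ ℓ f, ReconSeq a S ℓ f ∧ f 0 = I ∧ f ℓ = J) ↔ ReflTransGen (FeasibleReconStep a S) I J := by
  constructor
  · rintro ⟨ℓ, f, ⟨hf, hstep⟩, rfl, rfl⟩
    refine ReflTransGen.lift f (fun _ _ h => h) _ _
      (reflTransGen_of_succ_of_le (fun i j => FeasibleReconStep a S (f i) (f j)) (fun i hi => ?_)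
        (Nat.zero_le ℓ))
    rw [Order.succ_eq_add_one]
    exact ⟨hf i hi.2.le, hf (i + 1) hi.2, hstep i hi.2⟩
  · intro h
    induction h with
    | refl =>
      exact ⟨0, fun _ => I, ⟨fun _ _ => hI, fun _ h => absurd h (Nat.not_lt_zero _)⟩, rfl, rfl⟩
    | @tail J K _ hJK ih =>
      obtain ⟨ℓ, f, ⟨hf, hstep⟩, hf0, hfℓ⟩ := ih
      refine ⟨ℓ + 1, fun i => if i ≤ ℓ then f i else K, ⟨fun i hi => ?_, fun i hi => ?_⟩,
        by simp [hf0], by simp⟩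
      · dsimp only
        split_ifs with h
        exacts [hf i h, hJK.2.1]
      · rcases (Nat.lt_succ_iff.1 hi).lt_or_eq with hi | rfl
        · simpa [hi.le, Nat.succ_le_of_lt hi] using hstep i hi
        · simpa [hfℓ] using hJK.2.2

/-- `ps'` is `ps` with `i` put on top of pile `t`, the leftmost pile whose top is above `a i`
(a new pile when `t = ps.length`). -/
structure IsPlacement (a : ℕ → ℕ) (ps : List (List ℕ)) (i t : ℕ) (ps' : List (List ℕ)) :
    Prop where
  le_length : t ≤ ps.length
  top_le : ∀ s < t, a (ps.getD s []).headI ≤ a i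
  lt_top : t < ps.length → a i < a (ps.getD t []).headI
  getD_eq : ∀ s, ps'.getD s [] = if s = t then i :: ps.getD s [] else ps.getD s []
  length_eq : ps'.length = max ps.length (t + 1)

theorem exists_isPlacement_place (a : ℕ → ℕ) (ps : List (List ℕ)) (i : ℕ) :
    ∃ t, IsPlacement a ps i t (place a ps i) := by
  induction ps with
  | nil =>
    exact ⟨0, by simp, by simp, by simp, fun s => by cases s <;> simp [place], by simp [place]⟩
  | cons p ps ih =>
    by_cases h : a i < a p.headI
    · refine ⟨0, by simp, by simp, by simpa using h, fun s => ?_, by simp [place, h]⟩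
      cases s <;> simp [place, h]
    · obtain ⟨t, ht⟩ := ih
      refine ⟨t + 1, by simpa using ht.le_length, fun s hs => ?_, fun hs => ?_, fun s => ?_, ?_⟩
      · cases s
        · simpa using h
        · simpa using ht.top_le _ (by omega)
      · simpa using ht.lt_top (by simpa using hs)
      · cases s
        · simp [place, h]
        · simpa [place, h] using ht.getD_eq _
      · simp [place, h, ht.length_eq]

/-- Pile `s` is `ps.getD s []`, listed from the top. The fields `lt_of_mem_of_mem` and
`exists_pred` together say that the pile of `x` is one less than the length of a longest
increasing subsequence ending at `x`. -/
structure PileInv (a : ℕ → ℕ) (m : ℕ) (ps : List (List ℕ)) : Prop where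
  ne_nil : ∀ s < ps.length, ps.getD s [] ≠ []
  exists_mem_iff : ∀ x, (∃ s, x ∈ ps.getD s []) ↔ x < m
  eq_of_mem_of_mem : ∀ {x s t}, x ∈ ps.getD s [] → x ∈ ps.getD t [] → s = t
  pairwise_gt : ∀ s, (ps.getD s []).Pairwise (· > ·)
  lt_of_mem_of_mem : ∀ {s t x j}, s ≤ t → j ∈ ps.getD s [] → x ∈ ps.getD t [] → x < j →
    a j < a x
  exists_pred : ∀ {t x}, x ∈ ps.getD (t + 1) [] → ∃ j ∈ ps.getD t [], j < x ∧ a j < a x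
  top_lt_top : ∀ {s t}, s < t → t < ps.length →
    a (ps.getD s []).headI < a (ps.getD t []).headI

section PatienceSorting

variable {a : ℕ → ℕ} {m : ℕ} {ps ps' : List (List ℕ)} {t : ℕ}

theorem PileInv.lt_of_mem (hP : PileInv a m ps) {x s : ℕ} (hx : x ∈ ps.getD s []) : x < m :=
  (hP.exists_mem_iff x).1 ⟨s, hx⟩

theorem PileInv.top_le_of_mem (hP : PileInv a m ps) {x s : ℕ} (hx : x ∈ ps.getD s []) :
    a (ps.getD s []).headI ≤ a x := by
  have hpair := hP.pairwise_gt s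
  cases hp : ps.getD s [] with
  | nil => rw [hp] at hx; exact absurd hx List.not_mem_nil
  | cons y ys =>
    rw [hp] at hx hpair
    rcases List.mem_cons.1 hx with rfl | hx
    · rfl
    · exact (hP.lt_of_mem_of_mem le_rfl (hp ▸ List.mem_cons_self)
        (hp ▸ List.mem_cons_of_mem y hx) ((List.pairwise_cons.1 hpair).1 x hx)).le

theorem PileInv.top_le_top (hP : PileInv a m ps) {s t : ℕ} (hst : s ≤ t) (ht : t < ps.length) :
    a (ps.getD s []).headI ≤ a (ps.getD t []).headI := by
  rcases hst.lt_or_eq with hst | rfl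
  · exact (hP.top_lt_top hst ht).le
  · rfl

theorem IsPlacement.mem_getD_iff {i : ℕ} (h : IsPlacement a ps i t ps') {s x : ℕ} :
    x ∈ ps'.getD s [] ↔ (s = t ∧ x = i) ∨ x ∈ ps.getD s [] := by
  rw [h.getD_eq]
  split_ifs with hs <;> simp [hs]

theorem IsPlacement.lt_of_mem_of_mem (h : IsPlacement a ps m t ps') (hP : PileInv a m ps)
    {s r x j : ℕ} (hsr : s ≤ r) (hj : j ∈ ps'.getD s []) (hx : x ∈ ps'.getD r []) (hxj : x < j) :
    a j < a x := by
  rw [h.mem_getD_iff] at hj hx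
  rcases hj with ⟨rfl, rfl⟩ | hj <;> rcases hx with ⟨rfl, rfl⟩ | hx
  · exact absurd hxj (lt_irrefl _)
  · calc a j < a (ps.getD s []).headI := h.lt_top (by have := lt_length_of_mem_getD hx; omega)
      _ ≤ a (ps.getD r []).headI := hP.top_le_top hsr (lt_length_of_mem_getD hx)
      _ ≤ a x := hP.top_le_of_mem hx
  · exact absurd ((hP.lt_of_mem hj).trans hxj) (lt_irrefl _)
  · exact hP.lt_of_mem_of_mem hsr hj hx hxj

theorem IsPlacement.exists_pred (h : IsPlacement a ps m t ps') (hP : PileInv a m ps)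
    (hdist : ∀ x < m, a x ≠ a m) {r x : ℕ} (hx : x ∈ ps'.getD (r + 1) []) :
    ∃ j ∈ ps'.getD r [], j < x ∧ a j < a x := by
  rw [h.mem_getD_iff] at hx
  rcases hx with ⟨hrt, rfl⟩ | hx
  · have htop := headI_mem_getD (hP.ne_nil r (by have := h.le_length; omega))
    refine ⟨_, h.mem_getD_iff.2 (Or.inr htop), hP.lt_of_mem htop, ?_⟩
    exact lt_of_le_of_ne (h.top_le r (by omega)) (hdist _ (hP.lt_of_mem htop))
  · obtain ⟨j, hj, hjx, haj⟩ := hP.exists_pred hx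
    exact ⟨j, h.mem_getD_iff.2 (Or.inr hj), hjx, haj⟩

theorem IsPlacement.top_lt_top (h : IsPlacement a ps m t ps') (hP : PileInv a m ps)
    (hdist : ∀ x < m, a x ≠ a m) {s r : ℕ} (hsr : s < r) (hr : r < ps'.length) :
    a (ps'.getD s []).headI < a (ps'.getD r []).headI := by
  have := h.length_eq
  have := h.le_length
  rw [h.getD_eq, h.getD_eq]
  split_ifs with hs hr'
  · omega
  · subst hs
    exact (h.lt_top (by omega)).trans (hP.top_lt_top hsr (by omega))
  · have htop := headI_mem_getD (hP.ne_nil s (by omega))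
    exact lt_of_le_of_ne (h.top_le s (by omega)) (hdist _ (hP.lt_of_mem htop))
  · exact hP.top_lt_top hsr (by omega)

theorem PileInv.of_isPlacement (hP : PileInv a m ps) (hdist : ∀ x < m, a x ≠ a m)
    (h : IsPlacement a ps m t ps') : PileInv a (m + 1) ps' where
  ne_nil s hs := by
    have := h.length_eq
    have := h.le_length
    rw [h.getD_eq]
    split_ifs
    · exact List.cons_ne_nil _ _
    · exact hP.ne_nil s (by omega)
  exists_mem_iff x := by
    simp_rw [h.mem_getD_iff]
    constructor
    · rintro ⟨s, ⟨-, rfl⟩ | hx⟩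
      · exact Nat.lt_succ_self _
      · exact (hP.lt_of_mem hx).trans (Nat.lt_succ_self m)
    · intro hx
      rcases Nat.lt_succ_iff_lt_or_eq.1 hx with hx | rfl
      · obtain ⟨s, hs⟩ := (hP.exists_mem_iff x).2 hx
        exact ⟨s, Or.inr hs⟩
      · exact ⟨t, Or.inl ⟨rfl, rfl⟩⟩
  eq_of_mem_of_mem hx hy := by
    rw [h.mem_getD_iff] at hx hy
    rcases hx with ⟨rfl, rfl⟩ | hx <;> rcases hy with ⟨rfl, hxy⟩ | hy
    · rfl
    · exact absurd (hP.lt_of_mem hy) (lt_irrefl _)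
    · exact absurd (hP.lt_of_mem hx) (hxy ▸ lt_irrefl _)
    · exact hP.eq_of_mem_of_mem hx hy
  pairwise_gt s := by
    rw [h.getD_eq]
    split_ifs
    · exact List.pairwise_cons.2 ⟨fun y hy => hP.lt_of_mem hy, hP.pairwise_gt s⟩
    · exact hP.pairwise_gt s
  lt_of_mem_of_mem := h.lt_of_mem_of_mem hP
  exists_pred := h.exists_pred hP hdist
  top_lt_top := h.top_lt_top hP hdist

theorem pileInv_pilesOf (hinj : Set.InjOn a (Set.Iio m)) :
    PileInv a m (pilesOf a (List.range m)) := by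
  induction m with
  | zero => refine ⟨?_, ?_, ?_, ?_, ?_, ?_, ?_⟩ <;> simp [pilesOf]
  | succ m ih =>
    have hdist : ∀ x < m, a x ≠ a m := fun x hx hax =>
      hx.ne (hinj (Set.mem_Iio.2 (by omega)) (Set.mem_Iio.2 (by omega)) hax)
    obtain ⟨t, ht⟩ := exists_isPlacement_place a (pilesOf a (List.range m)) m
    rw [show pilesOf a (List.range (m + 1)) = place a (pilesOf a (List.range m)) m by
      simp [pilesOf, List.range_succ]]
    exact (ih (hinj.mono (Set.Iio_subset_Iio (Nat.le_succ m)))).of_isPlacement hdist ht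

end PatienceSorting

def pileOf (ps : List (List ℕ)) (x : ℕ) : ℕ :=
  ps.findIdx (x ∈ ·)

namespace PileInv

variable {a : ℕ → ℕ} {m : ℕ} {ps : List (List ℕ)}

theorem mem_getD_pileOf (hP : PileInv a m ps) {x : ℕ} (hx : x < m) :
    x ∈ ps.getD (pileOf ps x) [] := by
  obtain ⟨s, hs⟩ := (hP.exists_mem_iff x).2 hx
  have hs' := lt_length_of_mem_getD hs
  have hlt : pileOf ps x < ps.length := List.findIdx_lt_length_of_exists
    ⟨_, List.getElem_mem hs', decide_eq_true (List.getD_eq_getElem _ _ hs' ▸ hs)⟩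
  rw [List.getD_eq_getElem _ _ hlt]
  exact of_decide_eq_true (List.findIdx_getElem (w := hlt))

theorem mem_getD_iff (hP : PileInv a m ps) {x s : ℕ} (hx : x < m) :
    x ∈ ps.getD s [] ↔ pileOf ps x = s :=
  ⟨fun hs => hP.eq_of_mem_of_mem (hP.mem_getD_pileOf hx) hs,
    fun h => h ▸ hP.mem_getD_pileOf hx⟩

theorem pileOf_lt_length (hP : PileInv a m ps) {x : ℕ} (hx : x < m) :
    pileOf ps x < ps.length :=
  lt_length_of_mem_getD (hP.mem_getD_pileOf hx)

theorem exists_pileOf_eq (hP : PileInv a m ps) {s : ℕ} (hs : s < ps.length) :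
    ∃ x < m, pileOf ps x = s := by
  have htop := headI_mem_getD (hP.ne_nil s hs)
  have hlt := hP.lt_of_mem htop
  exact ⟨_, hlt, (hP.mem_getD_iff hlt).1 htop⟩

theorem pileOf_lt_pileOf (hP : PileInv a m ps) {x y : ℕ} (hxy : x < y) (hy : y < m)
    (ha : a x < a y) : pileOf ps x < pileOf ps y := by
  by_contra! h
  exact (hP.lt_of_mem_of_mem h (hP.mem_getD_pileOf hy)
    (hP.mem_getD_pileOf (hxy.trans hy)) hxy).not_gt ha

theorem le_of_pileOf_eq (hP : PileInv a m ps) {x y : ℕ} (hxy : x < y) (hy : y < m)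
    (h : pileOf ps x = pileOf ps y) : a y ≤ a x :=
  not_lt.1 fun ha => (hP.pileOf_lt_pileOf hxy hy ha).ne h

theorem exists_pileOf_add_one_eq (hP : PileInv a m ps) {x : ℕ} (hx : x < m)
    (h : 0 < pileOf ps x) : ∃ j < x, a j < a x ∧ pileOf ps j + 1 = pileOf ps x := by
  have hmem := hP.mem_getD_pileOf hx
  rw [← Nat.sub_add_cancel h] at hmem
  obtain ⟨j, hj, hjx, haj⟩ := hP.exists_pred hmem
  exact ⟨j, hjx, haj, by rw [(hP.mem_getD_iff (hjx.trans hx)).1 hj]; omega⟩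

theorem below_iff (hP : PileInv a m ps) {u v : ℕ} :
    Below ps u v ↔ u < v ∧ v < m ∧ pileOf ps u = pileOf ps v := by
  constructor
  · rintro ⟨p, hp, hpos⟩
    obtain ⟨s, hs, rfl⟩ := List.mem_iff_getElem.1 hp
    rw [← List.getD_eq_getElem _ [] hs] at hpos
    obtain ⟨hu, hv, huv⟩ := (exists_getElem?_lt_iff_of_pairwise_gt (hP.pairwise_gt s)).1 hpos
    have hvm := hP.lt_of_mem hv
    exact ⟨huv, hvm,
      ((hP.mem_getD_iff (huv.trans hvm)).1 hu).trans ((hP.mem_getD_iff hvm).1 hv).symm⟩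
  · rintro ⟨huv, hvm, hpile⟩
    have hv := hP.mem_getD_pileOf hvm
    have hs := lt_length_of_mem_getD hv
    refine ⟨_, List.getElem_mem hs, ?_⟩
    rw [← List.getD_eq_getElem _ [] hs]
    refine (exists_getElem?_lt_iff_of_pairwise_gt (hP.pairwise_gt _)).2 ⟨?_, hv, huv⟩
    exact (hP.mem_getD_iff (huv.trans hvm)).2 hpile

theorem strictMonoOn_pileOf (hP : PileInv a m ps) {I : Finset ℕ} (hI : Feasible a I)
    (hIm : ∀ x ∈ I, x < m) : StrictMonoOn (pileOf ps) (I : Set ℕ) :=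
  fun _ hx _ hy hxy => hP.pileOf_lt_pileOf hxy (hIm _ hy) (hI _ hx _ hy hxy)

theorem card_le_length (hP : PileInv a m ps) {I : Finset ℕ} (hI : Feasible a I)
    (hIm : ∀ x ∈ I, x < m) : I.card ≤ ps.length := by
  simpa using Finset.card_le_card_of_injOn (t := Finset.range ps.length) (pileOf ps)
    (fun x hx => Finset.mem_range.2 (hP.pileOf_lt_length (hIm x hx)))
    (hP.strictMonoOn_pileOf hI hIm).injOn

theorem exists_feasible_card_eq_pileOf (hP : PileInv a m ps) {x : ℕ} (hx : x < m) :
    ∃ F : Finset ℕ, Feasible a F ∧ (∀ y ∈ F, y ≤ x ∧ a y ≤ a x) ∧ F.card = pileOf ps x + 1 := by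
  induction h : pileOf ps x using Nat.strong_induction_on generalizing x with
  | _ s ih =>
    rcases Nat.eq_zero_or_pos s with rfl | hs
    · refine ⟨{x}, fun i hi j hj hij => ?_, by simp, by simp⟩
      rw [Finset.mem_singleton] at hi hj
      exact absurd (hi.trans hj.symm) hij.ne
    · obtain ⟨j, hjx, haj, hpile⟩ := hP.exists_pileOf_add_one_eq hx (h ▸ hs)
      obtain ⟨F, hF, hFj, hcard⟩ := ih _ (by omega) (hjx.trans hx) rfl
      have hFx : ∀ y ∈ F, y < x ∧ a y < a x := fun y hy =>
        ⟨(hFj y hy).1.trans_lt hjx, (hFj y hy).2.trans_lt haj⟩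
      refine ⟨insert x F, Feasible.insert hF hFx, fun y hy => ?_, ?_⟩
      · rcases Finset.mem_insert.1 hy with rfl | hy
        · exact ⟨le_rfl, le_rfl⟩
        · exact ⟨(hFx y hy).1.le, (hFx y hy).2.le⟩
      · rw [Finset.card_insert_of_notMem fun hxF => (hFx x hxF).1.false, hcard, hpile, h]

theorem exists_feasible_card_eq_length (hP : PileInv a m ps) :
    ∃ F : Finset ℕ, Feasible a F ∧ (∀ y ∈ F, y < m) ∧ F.card = ps.length := by
  rcases Nat.eq_zero_or_pos ps.length with h | h
  · exact ⟨∅, by simp [Feasible], by simp, by simp [h]⟩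
  · obtain ⟨x, hx, hpile⟩ := hP.exists_pileOf_eq (Nat.sub_lt h one_pos)
    obtain ⟨F, hF, hFx, hcard⟩ := hP.exists_feasible_card_eq_pileOf hx
    exact ⟨F, hF, fun y hy => (hFx y hy).1.trans_lt hx, by omega⟩

end PileInv

section MaxFeasible

variable {a : ℕ → ℕ} {n : ℕ} {I J : Finset ℕ} {ps : List (List ℕ)}

theorem MaxFeasible.lt (hI : MaxFeasible a n I) {x : ℕ} (hx : x ∈ I) : x < n + 1 :=
  Finset.mem_range.1 (hI.1 hx)

theorem MaxFeasible.of_card_eq (hI : MaxFeasible a n I) (hJ : J ⊆ Finset.range (n + 1))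
    (hJf : Feasible a J) (hcard : J.card = I.card) : MaxFeasible a n J :=
  ⟨hJ, hJf, fun K hK hKf => hcard ▸ hI.2.2 K hK hKf⟩

theorem MaxFeasible.card_eq_length (hP : PileInv a (n + 1) ps) (hI : MaxFeasible a n I) :
    I.card = ps.length := by
  obtain ⟨F, hF, hFm, hcard⟩ := hP.exists_feasible_card_eq_length
  exact le_antisymm (hP.card_le_length hI.2.1 fun _ => hI.lt)
    (hcard ▸ hI.2.2 F (fun y hy => Finset.mem_range.2 (hFm y hy)) hF)

theorem MaxFeasible.exists_mem_pileOf_eq (hP : PileInv a (n + 1) ps) (hI : MaxFeasible a n I)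
    {s : ℕ} (hs : s < ps.length) : ∃ x ∈ I, pileOf ps x = s := by
  obtain ⟨x, hx, rfl⟩ := Finset.surj_on_of_inj_on_of_card_le (t := Finset.range ps.length)
    (fun x _ => pileOf ps x) (fun x hx => Finset.mem_range.2 (hP.pileOf_lt_length (hI.lt hx)))
    (fun x y hx hy => (hP.strictMonoOn_pileOf hI.2.1 fun _ => hI.lt).injOn hx hy)
    (by rw [Finset.card_range, hI.card_eq_length hP]) s (Finset.mem_range.2 hs)
  exact ⟨x, hx, rfl⟩

theorem MaxFeasible.lt_and_lt_of_pileOf_lt (hP : PileInv a (n + 1) ps) (hI : MaxFeasible a n I)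
    {x y : ℕ} (hx : x ∈ I) (hy : y ∈ I) (h : pileOf ps x < pileOf ps y) : x < y ∧ a x < a y := by
  have hxy := ((hP.strictMonoOn_pileOf hI.2.1 fun _ => hI.lt).lt_iff_lt hx hy).1 h
  exact ⟨hxy, hI.2.1 x hx y hy hxy⟩

end MaxFeasible

section PileLT

variable {a : ℕ → ℕ} {n : ℕ} {I J K : Finset ℕ}

local notation "𝒫" => pilesOf a (List.range (n + 1))

theorem pileLT_iff_s10 (hP : PileInv a (n + 1) 𝒫) :
    PileLT a n I J ↔ ∃ u v, I \ J = {u} ∧ J \ I = {v} ∧ u < v ∧ v < n + 1 ∧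
      pileOf 𝒫 u = pileOf 𝒫 v := by
  simp only [PileLT, hP.below_iff]

theorem StepLT.reconStep (h : StepLT a n I J) : ReconStep I J := by
  obtain ⟨u, v, hIJ, hJI, -⟩ := h.2.2
  exact reconStep_iff_exists_sdiff_eq.2 ⟨v, u, hJI, hIJ⟩

theorem StepLT.sum_lt (hP : PileInv a (n + 1) 𝒫) (h : StepLT a n I J) :
    ∑ i ∈ I, i < ∑ i ∈ J, i := by
  obtain ⟨u, v, hIJ, hJI, huv, -⟩ := (pileLT_iff_s10 hP).1 h.2.2
  exact sum_lt_sum_of_sdiff_eq_singleton hIJ hJI huv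

theorem InLowerSet.reflTransGen_feasibleReconStep (h : InLowerSet a n K I) :
    ReflTransGen (FeasibleReconStep a (Finset.range (n + 1))) K I :=
  ReflTransGen.mono (fun _ _ h => ⟨⟨h.1.1, h.1.2.1⟩, ⟨h.2.1.1, h.2.1.2.1⟩, h.reconStep⟩) _ _ h

theorem InLowerSet.maxFeasible (hI : MaxFeasible a n I) (h : InLowerSet a n K I) :
    MaxFeasible a n K := by
  rcases h.cases_head with rfl | ⟨_, hK, -⟩
  exacts [hI, hK.1]

theorem exists_minimalLT_inLowerSet (hP : PileInv a (n + 1) 𝒫) (hI : MaxFeasible a n I) :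
    ∃ K, MaxFeasible a n K ∧ MinimalLT a n K ∧ InLowerSet a n K I := by
  obtain ⟨K, hKI, hmin⟩ := (measure fun K : Finset ℕ => ∑ i ∈ K, i).wf.has_min
    {K | InLowerSet a n K I} ⟨I, ReflTransGen.refl⟩
  have hK := InLowerSet.maxFeasible hI hKI
  refine ⟨K, hK, fun J hJ hJK => ?_, hKI⟩
  have hstep : StepLT a n J K := ⟨hJ, hK, hJK⟩
  exact hmin J (ReflTransGen.head hstep hKI) (hstep.sum_lt hP)

theorem stepLT_or_stepLT_of_reconStep (hP : PileInv a (n + 1) 𝒫) (hI : MaxFeasible a n I)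
    (hJ : MaxFeasible a n J) (h : ReconStep I J) : StepLT a n I J ∨ StepLT a n J I := by
  obtain ⟨j, k, hJI, hIJ⟩ := reconStep_iff_exists_sdiff_eq.1 h
  have hj := Finset.mem_sdiff.1 (hJI ▸ Finset.mem_singleton_self j)
  have hk := Finset.mem_sdiff.1 (hIJ ▸ Finset.mem_singleton_self k)
  have hpile : pileOf 𝒫 k = pileOf 𝒫 j := by
    obtain ⟨x, hxI, hx⟩ := hI.exists_mem_pileOf_eq hP (hP.pileOf_lt_length (hJ.lt hj.1))
    by_cases hxk : x = k
    · exact hxk ▸ hx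
    have hxj := (hP.strictMonoOn_pileOf hJ.2.1 fun _ => hJ.lt).injOn
      (mem_of_sdiff_eq_singleton hIJ hxI hxk) hj.1 hx
    exact absurd (hxj ▸ hxI) hj.2
  rcases lt_or_gt_of_ne (fun h : k = j => hj.2 (h ▸ hk.1)) with hkj | hjk
  · exact Or.inl ⟨hI, hJ, (pileLT_iff_s10 hP).2 ⟨k, j, hIJ, hJI, hkj, hJ.lt hj.1, hpile⟩⟩
  · exact Or.inr ⟨hJ, hI, (pileLT_iff_s10 hP).2 ⟨j, k, hJI, hIJ, hjk, hI.lt hk.1, hpile.symm⟩⟩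

section Diamond

variable {J₁ J₂ : Finset ℕ} {u₁ v₁ u₂ v₂ : ℕ}

theorem exists_stepLT_stepLT_of_pileOf_lt (hP : PileInv a (n + 1) 𝒫)
    (hJ₁ : MaxFeasible a n J₁) (h₁ : J₁ \ I = {u₁}) (h₁' : I \ J₁ = {v₁}) (hb₁ : Below 𝒫 u₁ v₁)
    (hJ₂ : MaxFeasible a n J₂) (h₂ : J₂ \ I = {u₂}) (h₂' : I \ J₂ = {v₂}) (hb₂ : Below 𝒫 u₂ v₂)
    (hlt : pileOf 𝒫 v₁ < pileOf 𝒫 v₂) : ∃ K, StepLT a n K J₁ ∧ StepLT a n K J₂ := by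
  obtain ⟨huv₁, -, hπ₁⟩ := hP.below_iff.1 hb₁
  obtain ⟨huv₂, hv₂, hπ₂⟩ := hP.below_iff.1 hb₂
  have hv : v₁ ≠ v₂ := fun h => hlt.ne (congrArg _ h)
  have hu₁J₁ := (Finset.mem_sdiff.1 (h₁ ▸ Finset.mem_singleton_self u₁)).1
  have hu₂J₂ := (Finset.mem_sdiff.1 (h₂ ▸ Finset.mem_singleton_self u₂)).1
  have hv₁J₂ := mem_of_sdiff_eq_singleton h₂'
    (Finset.mem_sdiff.1 (h₁' ▸ Finset.mem_singleton_self v₁)).1 hv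
  have hv₂J₁ := mem_of_sdiff_eq_singleton h₁'
    (Finset.mem_sdiff.1 (h₂' ▸ Finset.mem_singleton_self v₂)).1 hv.symm
  -- `{u₁, u₂}` is the only pair in `K` that lies in neither `J₁` nor `J₂`.
  have hu : u₁ < u₂ ∧ a u₁ < a u₂ := by
    refine ⟨huv₁.trans (hJ₂.lt_and_lt_of_pileOf_lt hP hv₁J₂ hu₂J₂ (hπ₂ ▸ hlt)).1, ?_⟩
    calc a u₁ < a v₂ := (hJ₁.lt_and_lt_of_pileOf_lt hP hu₁J₁ hv₂J₁ (hπ₁ ▸ hlt)).2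
      _ ≤ a u₂ := hP.le_of_pileOf_eq huv₂ hv₂ hπ₂
  obtain ⟨K, hK₁, hK₁', hK₂, hK₂'⟩ :=
    exists_sdiff_eq_singleton_of_sdiff_eq_singleton h₁ h₁' h₂ h₂' hu.1.ne hv
  have hK : MaxFeasible a n K := by
    refine hJ₁.of_card_eq (fun x hx => ?_)
      (Feasible.of_sdiff_eq_singleton hJ₁.2.1 hJ₂.2.1 hK₁ hK₂ hu)
      (card_eq_of_sdiff_eq_singleton hK₁ hK₁')
    by_cases hxu : x = u₂
    · exact hxu ▸ hJ₂.1 hu₂J₂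
    · exact hJ₁.1 (mem_of_sdiff_eq_singleton hK₁ hx hxu)
  exact ⟨K, ⟨hK, hJ₁, u₂, v₂, hK₁, hK₁', hb₂⟩, ⟨hK, hJ₂, u₁, v₁, hK₂, hK₂', hb₁⟩⟩

theorem exists_reflGen_reflGen_of_pileOf_eq (hP : PileInv a (n + 1) 𝒫)
    (hI : MaxFeasible a n I)
    (hJ₁ : MaxFeasible a n J₁) (h₁ : J₁ \ I = {u₁}) (h₁' : I \ J₁ = {v₁}) (hb₁ : Below 𝒫 u₁ v₁)
    (hJ₂ : MaxFeasible a n J₂) (h₂ : J₂ \ I = {u₂}) (h₂' : I \ J₂ = {v₂}) (hb₂ : Below 𝒫 u₂ v₂)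
    (heq : pileOf 𝒫 v₁ = pileOf 𝒫 v₂) :
    ∃ K, ReflGen (swap (StepLT a n)) J₁ K ∧ ReflGen (swap (StepLT a n)) J₂ K := by
  obtain ⟨-, -, hπ₁⟩ := hP.below_iff.1 hb₁
  obtain ⟨-, -, hπ₂⟩ := hP.below_iff.1 hb₂
  obtain rfl : v₁ = v₂ := (hP.strictMonoOn_pileOf hI.2.1 fun _ => hI.lt).injOn
    (Finset.mem_sdiff.1 (h₁' ▸ Finset.mem_singleton_self v₁)).1
    (Finset.mem_sdiff.1 (h₂' ▸ Finset.mem_singleton_self v₂)).1 heq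
  by_cases hu : u₁ = u₂
  · subst hu
    exact ⟨J₁, .refl, eq_of_sdiff_eq_singleton h₁ h₁' h₂ h₂' ▸ .refl⟩
  have h₁₂ := sdiff_eq_singleton_of_sdiff_eq_singleton h₁ h₁' h₂ h₂' hu
  have h₂₁ := sdiff_eq_singleton_of_sdiff_eq_singleton h₂ h₂' h₁ h₁' (Ne.symm hu)
  have hπ : pileOf 𝒫 u₁ = pileOf 𝒫 u₂ := hπ₁.trans hπ₂.symm
  have hu₁ := hJ₁.lt (Finset.mem_sdiff.1 (h₁ ▸ Finset.mem_singleton_self u₁)).1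
  have hu₂ := hJ₂.lt (Finset.mem_sdiff.1 (h₂ ▸ Finset.mem_singleton_self u₂)).1
  rcases lt_or_gt_of_ne hu with hlt | hgt
  · exact ⟨J₁, .refl, .single ⟨hJ₁, hJ₂, (pileLT_iff_s10 hP).2 ⟨u₁, u₂, h₁₂, h₂₁, hlt, hu₂, hπ⟩⟩⟩
  · exact ⟨J₂, .single ⟨hJ₂, hJ₁, (pileLT_iff_s10 hP).2 ⟨u₂, u₁, h₂₁, h₁₂, hgt, hu₁, hπ.symm⟩⟩, .refl⟩

theorem exists_reflGen_reflGen_of_stepLT (hP : PileInv a (n + 1) 𝒫) (h₁ : StepLT a n J₁ I)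
    (h₂ : StepLT a n J₂ I) :
    ∃ K, ReflGen (swap (StepLT a n)) J₁ K ∧ ReflGen (swap (StepLT a n)) J₂ K := by
  obtain ⟨hJ₁, hI, u₁, v₁, h₁, h₁', hb₁⟩ := h₁
  obtain ⟨hJ₂, -, u₂, v₂, h₂, h₂', hb₂⟩ := h₂
  rcases lt_trichotomy (pileOf 𝒫 v₁) (pileOf 𝒫 v₂) with hlt | heq | hgt
  · obtain ⟨K, hK₁, hK₂⟩ :=
      exists_stepLT_stepLT_of_pileOf_lt hP hJ₁ h₁ h₁' hb₁ hJ₂ h₂ h₂' hb₂ hlt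
    exact ⟨K, .single hK₁, .single hK₂⟩
  · exact exists_reflGen_reflGen_of_pileOf_eq hP hI hJ₁ h₁ h₁' hb₁ hJ₂ h₂ h₂' hb₂ heq
  · obtain ⟨K, hK₂, hK₁⟩ :=
      exists_stepLT_stepLT_of_pileOf_lt hP hJ₂ h₂ h₂' hb₂ hJ₁ h₁ h₁' hb₁ hgt
    exact ⟨K, .single hK₁, .single hK₂⟩


theorem join_of_reflTransGen_feasibleReconStep (hP : PileInv a (n + 1) 𝒫)
    (hI : MaxFeasible a n I) (h : ReflTransGen (FeasibleReconStep a (Finset.range (n + 1))) I J) :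
    Join (ReflTransGen (swap (StepLT a n))) I J := by
  have hequiv := equivalence_join_reflTransGen (r := swap (StepLT a n)) fun _ _ _ h₁ h₂ =>
    (exists_reflGen_reflGen_of_stepLT hP h₁ h₂).imp fun _ hK => ⟨hK.1, hK.2.to_reflTransGen⟩
  suffices MaxFeasible a n J ∧ Join (ReflTransGen (swap (StepLT a n))) I J from this.2
  induction h with
  | refl => exact ⟨hI, hequiv.refl I⟩
  | @tail X Y _ hXY ih =>
    have hY := ih.1.of_card_eq hXY.2.1.1 hXY.2.1.2 hXY.2.2.card_eq.symm
    have hXY' : Join (ReflTransGen (swap (StepLT a n))) X Y := by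
      rcases stepLT_or_stepLT_of_reconStep hP ih.1 hY hXY.2.2 with h | h
      exacts [⟨X, .refl, .single h⟩, ⟨Y, .single h, .refl⟩]
    exact ⟨hY, hequiv.trans ih.2 hXY'⟩

end Diamond

end PileLT

theorem injOn_Iio_of_mem_Icc {a : ℕ → ℕ} {n : ℕ} (h0 : a 0 = 0)
    (hmem : ∀ i ∈ Finset.Icc 1 n, a i ∈ Finset.Icc 1 n)
    (hinj : ∀ i ∈ Finset.Icc 1 n, ∀ j ∈ Finset.Icc 1 n, a i = a j → i = j) :
    Set.InjOn a (Set.Iio (n + 1)) := by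
  intro i hi j hj hij
  simp only [Set.mem_Iio, Finset.mem_Icc] at hi hj hmem hinj
  rcases i.eq_zero_or_pos with rfl | hi0 <;> rcases j.eq_zero_or_pos with rfl | hj0
  · rfl
  · have := (hmem j ⟨hj0, by omega⟩).1
    omega
  · have := (hmem i ⟨hi0, by omega⟩).1
    omega
  · exact hinj i ⟨hi0, by omega⟩ j ⟨hj0, by omega⟩ hij

theorem stmt10_general (n : ℕ) (a : ℕ → ℕ) (h0 : a 0 = 0)
    (hmem : ∀ i ∈ Finset.Icc 1 n, a i ∈ Finset.Icc 1 n)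
    (hinj : ∀ i ∈ Finset.Icc 1 n, ∀ j ∈ Finset.Icc 1 n, a i = a j → i = j)
    (I J : Finset ℕ) (hI : MaxFeasible a n I) :
    (∃ ℓ f, ReconSeq a (Finset.range (n + 1)) ℓ f ∧ f 0 = I ∧ f ℓ = J) ↔
      (∃ K : Finset ℕ, MaxFeasible a n K ∧ MinimalLT a n K ∧
        InLowerSet a n K I ∧ InLowerSet a n K J) := by
  have hP := pileInv_pilesOf (injOn_Iio_of_mem_Icc h0 hmem hinj)
  rw [exists_reconSeq_iff_reflTransGen ⟨hI.1, hI.2.1⟩]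
  constructor
  · intro h
    obtain ⟨D, hID, hJD⟩ := join_of_reflTransGen_feasibleReconStep hP hI h
    have hDI : InLowerSet a n D I := reflTransGen_swap.1 hID
    obtain ⟨K, hK, hKmin, hKD⟩ := exists_minimalLT_inLowerSet hP (hDI.maxFeasible hI)
    exact ⟨K, hK, hKmin, hKD.trans hDI, hKD.trans (reflTransGen_swap.1 hJD)⟩
  · rintro ⟨K, -, -, hKI, hKJ⟩
    have hIK := reflTransGen_swap.2 hKI.reflTransGen_feasibleReconStep
    exact (ReflTransGen.mono (fun _ _ h => FeasibleReconStep.symm h) _ _ hIK).trans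
      hKJ.reflTransGen_feasibleReconStep

/-- For maximum feasible sets `I` and `J` of `a₀ = 0, a₁, …, aₙ` (where
`a₁, …, aₙ` are distinct integers between `1` and `n`), there is a
reconfiguration sequence between `I` and `J` if and only if `I` and `J` are
`⊲`-equivalent, i.e. the unique `⊲`-minimal set of `M(I)` equals the unique
`⊲`-minimal set of `M(J)` (equivalently, some `⊲`-minimal maximum feasible
set lies in both `M(I)` and `M(J)`). -/
theorem stmt10 (n : ℕ) (a : ℕ → ℕ) (hn : 0 < n) (h0 : a 0 = 0)
    (hmem : ∀ i ∈ Finset.Icc 1 n, a i ∈ Finset.Icc 1 n)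
    (hinj : ∀ i ∈ Finset.Icc 1 n, ∀ j ∈ Finset.Icc 1 n, a i = a j → i = j)
    (I J : Finset ℕ) (hI : MaxFeasible a n I) (hJ : MaxFeasible a n J) :
    (∃ ℓ f, ReconSeq a (Finset.range (n + 1)) ℓ f ∧ f 0 = I ∧ f ℓ = J) ↔
      (∃ K : Finset ℕ, MaxFeasible a n K ∧ MinimalLT a n K ∧
        InLowerSet a n K I ∧ InLowerSet a n K J) :=
  stmt10_general n a h0 hmem hinj I J hI
end
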